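/- arXiv:1609.00919 — 4 statements merged into one kernel-verified Lean document; each statement's English description precedes it below -/
import Mathlib

section
/- Soundness of the frame rule *D for data nodes: suppose u ∉ x⃗ and the variables v⃗ are disjoint from x⃗, and the entailment F₁ ⊢ ∃x⃗.(F₂ ∧ u = t ∧ v⃗ = w⃗) is valid. Then the entailment F₁ * (u ↦ v⃗) ⊢ ∃x⃗.(F₂ * (t ↦ w⃗)) is valid. -/
/-! Frame `u ↦ v⃗` onto the premise, extrude `∃x⃗` past it (it mentions no `x ∈ x⃗`),
and under the binder turn `u ↦ v⃗` into `t ↦ w⃗` using `u = t` and `v⃗ = w⃗`. -/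

/-- SL assertions as predicates on (stack, finite heap) models. -/
abbrev Assn (Var Val : Type) [DecidableEq Val] :=
  (Var → Val) → Finmap (fun _ : Val => List Val) → Prop

/-- Separating conjunction: the heap splits into two disjoint parts. -/
def star {Var Val : Type} [DecidableEq Val] (A B : Assn Var Val) : Assn Var Val :=
  fun s h => ∃ h₁ h₂, h₁.Disjoint h₂ ∧ h = h₁ ∪ h₂ ∧ A s h₁ ∧ B s h₂

/-- Singleton heap predicate `u ↦ v⃗`: the domain is exactly `{s u}`,
storing the values of `v⃗`. -/
def ptsTo {Var Val : Type} [DecidableEq Val] (u : Var) (vs : List Var) : Assn Var Val :=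
  fun s h => h = Finmap.singleton (s u) (vs.map s)

/-- Validity of an entailment `A ⊢ B`: every model of `A` is a model of `B`. -/
def valid {Var Val : Type} [DecidableEq Val] (A B : Assn Var Val) : Prop :=
  ∀ s h, A s h → B s h

/-- Existential quantification over a list of variables. -/
def exs {Var Val : Type} [DecidableEq Val] [DecidableEq Var] :
    List Var → Assn Var Val → Assn Var Val
  | [], F => F
  | x :: xs, F => fun s h => ∃ v : Val, exs xs F (Function.update s x v) h

variable {Var Val : Type} [DecidableEq Val]

theorem valid.trans {A B C : Assn Var Val} (hAB : valid A B) (hBC : valid B C) : valid A C :=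
  fun s h hA => hBC s h (hAB s h hA)

theorem valid_star_left {A A' B : Assn Var Val} (hA : valid A A') :
    valid (star A B) (star A' B) := by
  rintro s h ⟨h₁, h₂, hdisj, rfl, hA₁, hB₂⟩
  exact ⟨h₁, h₂, hdisj, rfl, hA s h₁ hA₁, hB₂⟩

theorem valid_exs [DecidableEq Var] {A B : Assn Var Val} (hAB : valid A B) :
    ∀ xs, valid (exs xs A) (exs xs B)
  | [] => hAB
  | _ :: xs => fun _ _ ⟨v, hv⟩ => ⟨v, valid_exs hAB xs _ _ hv⟩

def NotFree [DecidableEq Var] (x : Var) (P : Assn Var Val) : Prop :=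
  ∀ s v h, P s h → P (Function.update s x v) h

theorem notFree_ptsTo [DecidableEq Var] {x u : Var} {vs : List Var} (hu : x ≠ u)
    (hvs : x ∉ vs) : NotFree x (ptsTo (Val := Val) u vs) := by
  intro s v h hpt
  have hvs' : vs.map (Function.update s x v) = vs.map s :=
    List.map_congr_left fun y hy => Function.update_of_ne (ne_of_mem_of_not_mem hy hvs) v s
  rwa [ptsTo, Function.update_of_ne hu.symm, hvs']

theorem valid_star_exs [DecidableEq Var] {A P : Assn Var Val} :
    ∀ xs : List Var, (∀ x ∈ xs, NotFree x P) → valid (star (exs xs A) P) (exs xs (star A P))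
  | [], _ => fun _ _ hAP => hAP
  | x :: xs, hP => by
    rintro s h ⟨h₁, h₂, hdisj, rfl, ⟨v, hA₁⟩, hP₂⟩
    exact ⟨v, valid_star_exs xs (fun y hy => hP y (List.mem_cons_of_mem x hy)) _ _
      ⟨h₁, h₂, hdisj, rfl, hA₁, hP x List.mem_cons_self s v h₂ hP₂⟩⟩

theorem valid_star_ptsTo_of_eq (F : Assn Var Val) (u t : Var) (vs ws : List Var) :
    valid (star (fun s h => F s h ∧ s u = s t ∧ vs.map s = ws.map s) (ptsTo u vs))
      (star F (ptsTo t ws)) := by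
  rintro s h ⟨h₁, h₂, hdisj, rfl, ⟨hF, hut, hvw⟩, hpt⟩
  exact ⟨h₁, h₂, hdisj, rfl, hF, by rwa [ptsTo, ← hut, ← hvw]⟩

/-- Soundness of the frame rule `*D` for data nodes: if `u ∉ x⃗`, `v⃗` is
disjoint from `x⃗`, and `F₁ ⊢ ∃x⃗.(F₂ ∧ u = t ∧ v⃗ = w⃗)` is valid, then
`F₁ * (u ↦ v⃗) ⊢ ∃x⃗.(F₂ * (t ↦ w⃗))` is valid. -/
theorem starData_sound {Var Val : Type} [DecidableEq Val] [DecidableEq Var]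
    (F₁ F₂ : Assn Var Val) (u t : Var) (vs ws xs : List Var)
    (hu : u ∉ xs) (hdisj : ∀ v ∈ vs, v ∉ xs)
    (hprem : valid F₁
      (exs xs (fun s h => F₂ s h ∧ s u = s t ∧ vs.map s = ws.map s))) :
    valid (star F₁ (ptsTo u vs)) (exs xs (star F₂ (ptsTo t ws))) := by
  have hfree : ∀ x ∈ xs, NotFree x (ptsTo (Val := Val) u vs) := fun x hx =>
    notFree_ptsTo (ne_of_mem_of_not_mem hx hu) fun hv => hdisj x hv hx
  exact (valid_star_left hprem).trans <|
    (valid_star_exs xs hfree).trans (valid_exs (valid_star_ptsTo_of_eq F₂ u t vs ws) xs)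
end

section
/- Soundness of the hypothesis-application rule AH: suppose Σ₁ ≡ Σ₃θ * Σ' (syntactic equivalence after substitution θ), Π₁ ⇒ Π₃θ is valid, the hypothesis entailment Σ₃ ∧ Π₃ ⊢ F₄ is valid, and the entailment F₄θ * Σ' ∧ Π₁ ⊢ F₂ is valid. Then the entailment Σ₁ ∧ Π₁ ⊢ F₂ is valid. -/
/-- Applying a substitution `θ` to an assertion, semantically: `θmap s` is the
stack `λx. ⟦θ(x)⟧ₛ`, and by the substitution lemma `(s,h) ⊨ Fθ` iff
`(θmap s, h) ⊨ F`. -/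
def applySubst {Var Val : Type} [DecidableEq Val]
    (θmap : (Var → Val) → (Var → Val)) (F : Assn Var Val) : Assn Var Val :=
  fun s h => F (θmap s) h

/-- Soundness of the hypothesis-application rule `AH`: if `Σ₁ ≡ Σ₃θ * Σ'`
(semantically), `Π₁ ⇒ Π₃θ` is valid, the hypothesis `Σ₃ ∧ Π₃ ⊢ F₄` is valid,
and `F₄θ * Σ' ∧ Π₁ ⊢ F₂` is valid, then `Σ₁ ∧ Π₁ ⊢ F₂` is valid. -/
theorem applyHypo_sound {Var Val : Type} [DecidableEq Val]
    (S₁ S₃ S' F₂ F₄ : Assn Var Val) (P₁ P₃ : (Var → Val) → Prop)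
    (θmap : (Var → Val) → (Var → Val))
    (hequiv : ∀ s h, S₁ s h ↔ star (applySubst θmap S₃) S' s h)
    (hpure : ∀ s : Var → Val, P₁ s → P₃ (θmap s))
    (hhypo : valid (fun s h => S₃ s h ∧ P₃ s) F₄)
    (hprem : valid (fun s h => star (applySubst θmap F₄) S' s h ∧ P₁ s) F₂) :
    valid (fun s h => S₁ s h ∧ P₁ s) F₂ := by
  intro s h ⟨hS, hP⟩
  obtain ⟨h₁, h₂, hd, rfl, hS₃, hS'⟩ := (hequiv s _).mp hS
  exact hprem s _ ⟨⟨h₁, h₂, hd, rfl, hhypo (θmap s) h₁ ⟨hS₃, hpure s hP⟩, hS'⟩, hP⟩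
end

section
/- Validity of the entailment tmp(x) ⊢ ∃y. ls(x,y), where tmp(x) ≜ emp ∨ ∃u.(x ↦ u * tmp(u)) ∨ ∃u,v.(x ↦ u * u ↦ v * tmp(v)) and ls(x,y) ≜ (emp ∧ x = y) ∨ ∃w.(x ↦ w * ls(w,y)): every model of tmp(x) satisfies ∃y. ls(x,y). -/
/-- Heaps: finite partial maps from addresses (values) to values. -/
abbrev Heap (Val : Type) [DecidableEq Val] := Finmap (fun _ : Val => Val)

/-- `tmp(x) ≜ emp ∨ ∃u.(x ↦ u * tmp(u)) ∨ ∃u,v.(x ↦ u * u ↦ v * tmp(v))`,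
as the least predicate satisfying this definition. -/
inductive tmp {Val : Type} [DecidableEq Val] : Val → Heap Val → Prop
  | base (x : Val) : tmp x ∅
  | step1 (x u : Val) (h : Heap Val) :
      (Finmap.singleton x u).Disjoint h → tmp u h →
      tmp x (Finmap.singleton x u ∪ h)
  | step2 (x u v : Val) (h : Heap Val) :
      (Finmap.singleton x u).Disjoint (Finmap.singleton u v ∪ h) →
      (Finmap.singleton u v).Disjoint h → tmp v h →
      tmp x (Finmap.singleton x u ∪ (Finmap.singleton u v ∪ h))

/-- `ls(x,y) ≜ (emp ∧ x = y) ∨ ∃w.(x ↦ w * ls(w,y))`, as the least predicate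
satisfying this definition. -/
inductive ls {Val : Type} [DecidableEq Val] : Val → Val → Heap Val → Prop
  | base (x : Val) : ls x x ∅
  | step (x w y : Val) (h : Heap Val) :
      (Finmap.singleton x w).Disjoint h → ls w y h →
      ls x y (Finmap.singleton x w ∪ h)

/-- Validity of `tmp(x) ⊢ ∃y. ls(x,y)`: every model of `tmp(x)` satisfies
`∃y. ls(x,y)`. -/
theorem tmp_entails_ls {Val : Type} [DecidableEq Val]
    (x : Val) (h : Heap Val) (hx : tmp x h) : ∃ y : Val, ls x y h := by
  induction hx with
  | base x => exact ⟨x, ls.base x⟩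
  | step1 x u h hd _ ih =>
      obtain ⟨y, hy⟩ := ih
      exact ⟨y, ls.step x u y h hd hy⟩
  | step2 x u v h hd1 hd2 _ ih =>
      obtain ⟨y, hy⟩ := ih
      exact ⟨y, ls.step x u y _ hd1 (ls.step u v y h hd2 hy)⟩
end

section
/- Validity of list-segment composition for even-length lists: lsEven(x,y) * (y ↦ z) * lsEven(z,t) ⊢ ∃u.(lsEven(x,u) * (u ↦ t)), where lsEven(x,y) ≜ (emp ∧ x = y) ∨ ∃u,v.(x ↦ u * u ↦ v * lsEven(v,y)) denotes list segments of even length. -/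
/-- `lsEven(x,y) ≜ (emp ∧ x = y) ∨ ∃u,v.(x ↦ u * u ↦ v * lsEven(v,y))`:
list segments of even length, as the least predicate satisfying this
definition. -/
inductive lsEven {Val : Type} [DecidableEq Val] : Val → Val → Heap Val → Prop
  | base (x : Val) : lsEven x x ∅
  | step (x u v y : Val) (h : Heap Val) :
      (Finmap.singleton x u).Disjoint (Finmap.singleton u v ∪ h) →
      (Finmap.singleton u v).Disjoint h → lsEven v y h →
      lsEven x y (Finmap.singleton x u ∪ (Finmap.singleton u v ∪ h))

/-- Appending two cells at the end of an even list segment. -/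
lemma lsEven_snoc2 {Val : Type} [DecidableEq Val]
    {x y a b : Val} {h : Heap Val}
    (hxy : lsEven x y h)
    (d1 : h.Disjoint (Finmap.singleton y a))
    (d2 : h.Disjoint (Finmap.singleton a b))
    (d3 : (Finmap.singleton y a : Heap Val).Disjoint (Finmap.singleton a b)) :
    lsEven x b (h ∪ (Finmap.singleton y a ∪ Finmap.singleton a b)) := by
  induction hxy with
  | base x =>
    rw [Finmap.empty_union]
    have := lsEven.step x a b b ∅ (by
      rw [Finmap.disjoint_union_right]
      exact ⟨d3, Finmap.disjoint_empty _ |>.symm _ _⟩)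
      ((Finmap.disjoint_empty _).symm _ _) (lsEven.base b)
    rwa [Finmap.union_empty] at this
  | step p u v q h' dpu duv hvq ih =>
    rw [Finmap.disjoint_union_left, Finmap.disjoint_union_left] at d1 d2
    have ih' := ih d1.2.2 d2.2.2 d3
    have goal := lsEven.step p u v b (h' ∪ (Finmap.singleton q a ∪ Finmap.singleton a b))
      (by
        rw [Finmap.disjoint_union_right, Finmap.disjoint_union_right,
          Finmap.disjoint_union_right]
        refine ⟨(Finmap.disjoint_union_right _ _ _).1 dpu |>.1,
          (Finmap.disjoint_union_right _ _ _).1 dpu |>.2,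
          d1.1, d2.1⟩)
      (by
        rw [Finmap.disjoint_union_right, Finmap.disjoint_union_right]
        exact ⟨duv, d1.2.1, d2.2.1⟩)
      ih'
    rw [Finmap.union_assoc, Finmap.union_assoc]
    exact goal

lemma lsEven_compose_aux {Val : Type} [DecidableEq Val]
    {z t : Val} {h₃ : Heap Val} (hzt : lsEven z t h₃) :
    ∀ (x y : Val) (h₁ : Heap Val), lsEven x y h₁ →
      h₁.Disjoint (Finmap.singleton y z) → h₁.Disjoint h₃ →
      (Finmap.singleton y z).Disjoint h₃ →
      ∃ (u : Val) (h₁' : Heap Val),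
        lsEven x u h₁' ∧ h₁'.Disjoint (Finmap.singleton u t) ∧
        h₁ ∪ (Finmap.singleton y z ∪ h₃) = h₁' ∪ Finmap.singleton u t := by
  induction hzt with
  | base z =>
    intro x y h₁ hxy d1 _ _
    exact ⟨y, h₁, hxy, d1, by rw [Finmap.union_empty]⟩
  | step z a b t h' dza dab hbt ih =>
    intro x y h₁ hxy d1 d2 d3
    rw [Finmap.disjoint_union_right, Finmap.disjoint_union_right] at d2 d3
    have dza' := (Finmap.disjoint_union_right _ _ _).1 dza
    have hxa : lsEven x a (h₁ ∪ (Finmap.singleton y z ∪ Finmap.singleton z a)) :=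
      lsEven_snoc2 hxy d1 d2.1 d3.1
    have ⟨u, h₁', hu1, hu2, hu3⟩ := ih x a (h₁ ∪ (Finmap.singleton y z ∪ Finmap.singleton z a))
      hxa
      (by rw [Finmap.disjoint_union_left, Finmap.disjoint_union_left]
          exact ⟨d2.2.1, d3.2.1, dza'.1⟩)
      (by rw [Finmap.disjoint_union_left, Finmap.disjoint_union_left]
          exact ⟨d2.2.2, d3.2.2, dza'.2⟩)
      dab
    refine ⟨u, h₁', hu1, hu2, ?_⟩
    rw [← hu3, Finmap.union_assoc, Finmap.union_assoc]

/-- Validity of `lsEven(x,y) * (y ↦ z) * lsEven(z,t) ⊢ ∃u.(lsEven(x,u) * (u ↦ t))`. -/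
theorem lsEven_compose {Val : Type} [DecidableEq Val]
    (x y z t : Val) (h : Heap Val)
    (hsat : ∃ h₁ h₂ h₃ : Heap Val,
      h₁.Disjoint h₂ ∧ h₁.Disjoint h₃ ∧ h₂.Disjoint h₃ ∧
      h = h₁ ∪ (h₂ ∪ h₃) ∧
      lsEven x y h₁ ∧ h₂ = Finmap.singleton y z ∧ lsEven z t h₃) :
    ∃ (u : Val) (h₁' h₂' : Heap Val),
      h₁'.Disjoint h₂' ∧ h = h₁' ∪ h₂' ∧
      lsEven x u h₁' ∧ h₂' = Finmap.singleton u t := by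
  obtain ⟨h₁, h₂, h₃, d12, d13, d23, rfl, hxy, rfl, hzt⟩ := hsat
  obtain ⟨u, h₁', hu1, hu2, hu3⟩ := lsEven_compose_aux hzt x y h₁ hxy d12 d13 d23
  exact ⟨u, h₁', Finmap.singleton u t, hu2, hu3, hu1, rfl⟩
end
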